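/- For every real number σ > 1 and every integer n ≥ 1, the point (2n − 1) • Θ₁ on the Weierstrass curve E_σ : y² = (x − 4(σ−1)²)³ + σ²(σ+1)²x² over ℝ, where Θ₁ = (8 − 8σ, 8σ² − 8), is an affine point, and its x-coordinate p satisfies p < 0. -/

import Mathlib

open WeierstrassCurve WeierstrassCurve.Affine

/-- The Weierstrass curve `E_σ : y² = (x − 4(σ−1)²)³ + σ²(σ+1)²x²` over `ℝ`. -/
def E (σ : ℝ) : WeierstrassCurve.Affine ℝ where
  a₁ := 0
  a₂ := σ ^ 2 * (σ + 1) ^ 2 - 12 * (σ - 1) ^ 2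
  a₃ := 0
  a₄ := 48 * (σ - 1) ^ 4
  a₆ := -64 * (σ - 1) ^ 6

/-!
Let `f` be the cubic of `E_σ`; it is increasing on `[0, ∞)` with `f 0 ≤ 0 ≤ f (4(σ-1)²)`, so it has
a root `e ≥ 0` with `f < 0` on `[0, e)` and `f' e ≥ 0`.

If `ℓ` is the line through `P` and `Q`, then `f - ℓ² = (X - x_P)(X - x_Q)(X - x_{P+Q})`. At the root
`X = e` this gives `(x_P - e)(x_Q - e)(x_{P+Q} - e) = ℓ(e)² ≥ 0`. When a factor vanishes, so does
`ℓ(e)`, and differentiating at `e` shows that the sum of the pairwise products is `f' e`, which is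
positive because `(e, 0)` is then a nonsingular point. So `P ↦ [x_P < e]` is a homomorphism to
`ℤ/2`. Since `x_{Θ₁} = 8 - 8σ < 0 ≤ e`, every odd multiple of `Θ₁` has `x < e`, hence `x < 0`.
-/

open Polynomial

lemma lt_zero_iff_xor_of_mul_nonneg {F : Type*} [Field F] [LinearOrder F] [IsStrictOrderedRing F]
    {u v w : F} (h : 0 ≤ u * v * w) (h₀ : u * v * w = 0 → 0 < u * v + u * w + v * w) :
    w < 0 ↔ Xor (u < 0) (v < 0) := by
  by_cases huvw : u * v * w = 0
  · have hpair := h₀ huvw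
    rcases mul_eq_zero.1 huvw with huv | rfl
    · rcases mul_eq_zero.1 huv with rfl | rfl
      · simp only [zero_mul, zero_add] at hpair
        simpa [Xor] using (neg_iff_neg_of_mul_pos hpair).symm
      · simp only [mul_zero, zero_mul, zero_add, add_zero] at hpair
        simpa [Xor] using (neg_iff_neg_of_mul_pos hpair).symm
    · simp only [mul_zero, add_zero] at hpair
      simp [Xor, neg_iff_neg_of_mul_pos hpair]
  · have hpos : 0 < u * v * w := lt_of_le_of_ne h (Ne.symm huvw)
    have hu : u ≠ 0 := by rintro rfl; simp at hpos
    have hv : v ≠ 0 := by rintro rfl; simp at hpos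
    rw [← neg_iff_neg_of_mul_pos hpos, mul_neg_iff]
    rcases hu.lt_or_gt with hu | hu <;> rcases hv.lt_or_gt with hv | hv <;>
      simp [Xor, hu, hv, hu.not_gt, hv.not_gt]

namespace WeierstrassCurve.Affine

variable {F : Type*} [Field F] {W : Affine F}

lemma mul_sub_addX_slope [DecidableEq F] (ha₁ : W.a₁ = 0) (ha₃ : W.a₃ = 0) {x₁ x₂ y₁ y₂ : F}
    (h₁ : W.Equation x₁ y₁) (h₂ : W.Equation x₂ y₂) (hxy : ¬(x₁ = x₂ ∧ y₁ = W.negY x₂ y₂)) (e : F) :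
    (x₁ - e) * (x₂ - e) * (W.addX x₁ x₂ (W.slope x₁ x₂ y₁ y₂) - e) =
        (W.slope x₁ x₂ y₁ y₂ * (e - x₁) + y₁) ^ 2 - (e ^ 3 + W.a₂ * e ^ 2 + W.a₄ * e + W.a₆) ∧
      (x₁ - e) * (x₂ - e) + (x₁ - e) * (W.addX x₁ x₂ (W.slope x₁ x₂ y₁ y₂) - e) +
          (x₂ - e) * (W.addX x₁ x₂ (W.slope x₁ x₂ y₁ y₂) - e) =
        3 * e ^ 2 + 2 * W.a₂ * e + W.a₄ -
          2 * W.slope x₁ x₂ y₁ y₂ * (W.slope x₁ x₂ y₁ y₂ * (e - x₁) + y₁) := by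
  have hval := congrArg (eval e) (addPolynomial_slope h₁ h₂ hxy)
  have hder := congrArg (eval e) (derivative_addPolynomial_slope h₁ h₂ hxy)
  rw [addPolynomial_eq] at hval hder
  simp only [Cubic.toPoly, ha₁, ha₃, derivative_neg, derivative_add, derivative_mul,
    derivative_X_pow, derivative_C, derivative_X, eval_add, eval_mul, eval_neg, eval_C, eval_X,
    eval_pow, eval_sub, eval_one, eval_zero] at hval hder
  constructor
  · linear_combination -hval
  · linear_combination hder

lemma equation_iff_sq_eq (ha₁ : W.a₁ = 0) (ha₃ : W.a₃ = 0) {x y : F} :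
    W.Equation x y ↔ y ^ 2 = x ^ 3 + W.a₂ * x ^ 2 + W.a₄ * x + W.a₆ := by
  rw [equation_iff, ha₁, ha₃]; ring_nf

lemma cubic_deriv_ne_zero_of_nonsingular (ha₁ : W.a₁ = 0) (ha₃ : W.a₃ = 0) {e y : F}
    (he : W.Equation e 0) (h : W.Nonsingular e y) : 3 * e ^ 2 + 2 * W.a₂ * e + W.a₄ ≠ 0 := by
  obtain ⟨hy, hns⟩ := (nonsingular_iff e y).1 h
  rw [equation_iff_sq_eq ha₁ ha₃] at he hy
  have hy0 : y ^ 2 = 0 := by rw [hy, ← he, zero_pow two_ne_zero]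
  obtain rfl : y = 0 := pow_eq_zero_iff two_ne_zero |>.1 hy0
  simpa [ha₁, ha₃, eq_comm] using hns

variable [LinearOrder F]

def Point.XLt (e : F) : W.Point → Prop
  | 0 => False
  | .some x _ _ => x < e

@[simp]
lemma Point.not_xLt_zero {e : F} : ¬(0 : W.Point).XLt e := id

@[simp]
lemma Point.xLt_some {e x y : F} (h : W.Nonsingular x y) : (Point.some x y h).XLt e ↔ x < e :=
  Iff.rfl

variable [IsStrictOrderedRing F]

lemma Point.xLt_add (ha₁ : W.a₁ = 0) (ha₃ : W.a₃ = 0) {e : F} (he : W.Equation e 0)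
    (hd : 0 ≤ 3 * e ^ 2 + 2 * W.a₂ * e + W.a₄) (P Q : W.Point) :
    (P + Q).XLt e ↔ Xor (P.XLt e) (Q.XLt e) := by
  rcases P with _ | @⟨x₁, y₁, h₁⟩
  · simp [← Point.zero_def, Xor]
  rcases Q with _ | @⟨x₂, y₂, h₂⟩
  · simp [← Point.zero_def, Xor]
  by_cases hxy : x₁ = x₂ ∧ y₁ = W.negY x₂ y₂
  · rw [add_of_Y_eq hxy.1 hxy.2]
    simp [Xor, hxy.1]
  rw [add_some hxy]
  simp only [xLt_some]
  obtain ⟨hprod, hpair⟩ := mul_sub_addX_slope ha₁ ha₃ h₁.1 h₂.1 hxy e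
  rw [← (equation_iff_sq_eq ha₁ ha₃).1 he, zero_pow two_ne_zero, sub_zero] at hprod
  simp only [← sub_neg (b := e)]
  refine lt_zero_iff_xor_of_mul_nonneg (by rw [hprod]; positivity) fun h0 => ?_
  have hm : W.slope x₁ x₂ y₁ y₂ * (e - x₁) + y₁ = 0 :=
    pow_eq_zero_iff two_ne_zero |>.1 (hprod.symm.trans h0)
  rw [hpair, hm, mul_zero, sub_zero]
  refine hd.lt_of_ne (Ne.symm ?_)
  rcases mul_eq_zero.1 h0 with h | h₃
  · rcases mul_eq_zero.1 h with h₁' | h₂'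
    · exact cubic_deriv_ne_zero_of_nonsingular ha₁ ha₃ he (sub_eq_zero.1 h₁' ▸ h₁)
    · exact cubic_deriv_ne_zero_of_nonsingular ha₁ ha₃ he (sub_eq_zero.1 h₂' ▸ h₂)
  · exact cubic_deriv_ne_zero_of_nonsingular ha₁ ha₃ he
      (sub_eq_zero.1 h₃ ▸ nonsingular_add h₁ h₂ hxy)

lemma Point.xLt_nsmul (ha₁ : W.a₁ = 0) (ha₃ : W.a₃ = 0) {e : F} (he : W.Equation e 0)
    (hd : 0 ≤ 3 * e ^ 2 + 2 * W.a₂ * e + W.a₄) (P : W.Point) (n : ℕ) :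
    (n • P).XLt e ↔ Odd n ∧ P.XLt e := by
  induction n with
  | zero => simp
  | succ n ih =>
    rw [succ_nsmul, xLt_add ha₁ ha₃ he hd, ih, Nat.odd_add_one]
    simp only [Xor]
    tauto

end WeierstrassCurve.Affine

lemma E_equation_iff {σ x y : ℝ} :
    (E σ).Equation x y ↔ y ^ 2 = (x - 4 * (σ - 1) ^ 2) ^ 3 + σ ^ 2 * (σ + 1) ^ 2 * x ^ 2 := by
  rw [equation_iff_sq_eq rfl rfl]
  simp only [E]
  constructor <;> intro h <;> linear_combination h

lemma exists_E_equation_zero (σ : ℝ) : ∃ e, 0 ≤ e ∧ (E σ).Equation e 0 := by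
  have hcont : ContinuousOn (fun x => (x - 4 * (σ - 1) ^ 2) ^ 3 + σ ^ 2 * (σ + 1) ^ 2 * x ^ 2)
      (Set.Icc 0 (4 * (σ - 1) ^ 2)) := by
    fun_prop
  obtain ⟨e, ⟨he0, -⟩, he⟩ := intermediate_value_Icc (by positivity) hcont
    (show (0 : ℝ) ∈ Set.Icc _ _ from
      ⟨by norm_num; exact Odd.pow_nonpos (by decide) (neg_nonpos.2 (by positivity)),
        by norm_num; positivity⟩)
  exact ⟨e, he0, E_equation_iff.2 (by simpa [eq_comm] using he)⟩

lemma E_deriv_nonneg (σ : ℝ) {e : ℝ} (he : 0 ≤ e) :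
    0 ≤ 3 * e ^ 2 + 2 * (E σ).a₂ * e + (E σ).a₄ := by
  have : 3 * e ^ 2 + 2 * (E σ).a₂ * e + (E σ).a₄ =
      3 * (e - 4 * (σ - 1) ^ 2) ^ 2 + 2 * (σ ^ 2 * (σ + 1) ^ 2) * e := by
    simp only [E]; ring
  rw [this]; positivity

lemma strictMonoOn_E_cubic (σ : ℝ) :
    StrictMonoOn (fun x => (x - 4 * (σ - 1) ^ 2) ^ 3 + σ ^ 2 * (σ + 1) ^ 2 * x ^ 2)
      (Set.Ici 0) := by
  intro x hx y hy hxy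
  set a := x - 4 * (σ - 1) ^ 2
  set b := y - 4 * (σ - 1) ^ 2
  have hs : 0 ≤ σ ^ 2 * (σ + 1) ^ 2 * (x + y) := by
    have := Set.mem_Ici.1 hx; have := Set.mem_Ici.1 hy; positivity
  have hab : 0 < b - a := by simp only [a, b]; linarith
  have hsq : 0 < a ^ 2 + a * b + b ^ 2 := by nlinarith [sq_nonneg (a + b)]
  have key : (b ^ 3 + σ ^ 2 * (σ + 1) ^ 2 * y ^ 2) - (a ^ 3 + σ ^ 2 * (σ + 1) ^ 2 * x ^ 2) =
      (y - x) * (a ^ 2 + a * b + b ^ 2 + σ ^ 2 * (σ + 1) ^ 2 * (x + y)) := by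
    simp only [a, b]; ring
  nlinarith [mul_pos (sub_pos.2 hxy) (add_pos_of_pos_of_nonneg hsq hs)]

lemma E_neg_of_lt {σ e x y : ℝ} (he : (E σ).Equation e 0) (he0 : 0 ≤ e) (h : (E σ).Equation x y)
    (hx : x < e) : x < 0 := by
  rw [E_equation_iff] at he h
  by_contra! hx0
  have := strictMonoOn_E_cubic σ hx0 he0 hx
  nlinarith [sq_nonneg y]

/-- For every real `σ > 1` and every `n ≥ 1`, the point `(2n − 1) • Θ₁` on `E_σ`, where
`Θ₁ = (8 − 8σ, 8σ² − 8)`, is an affine point whose `x`-coordinate is negative. -/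
theorem stmt_12 (σ : ℝ) (hσ : 1 < σ)
    (hΘ : (E σ).Nonsingular (8 - 8 * σ) (8 * σ ^ 2 - 8))
    (n : ℕ) (hn : 1 ≤ n) :
    ∃ (p q : ℝ) (h : (E σ).Nonsingular p q),
      (2 * n - 1) • Point.some _ _ hΘ = Point.some _ _ h ∧ p < 0 := by
  obtain ⟨e, he0, he⟩ := exists_E_equation_zero σ
  have hodd : ((2 * n - 1) • Point.some _ _ hΘ).XLt e :=
    (Point.xLt_nsmul rfl rfl he (E_deriv_nonneg σ he0) _ _).2
      ⟨⟨n - 1, by omega⟩, show 8 - 8 * σ < e by linarith⟩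
  rcases hP : (2 * n - 1) • Point.some _ _ hΘ with _ | ⟨p, q, h⟩
  · rw [hP] at hodd
    exact hodd.elim
  · rw [hP] at hodd
    exact ⟨p, q, h, rfl, E_neg_of_lt he he0 h.1 hodd⟩
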